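/- Let N ≥ 2, p ∈ ℝ^N, and let K be the N×N symmetric matrix with K_ij = −p_N δ_{ij} for i,j < N, K_iN = K_Ni = p_i for i < N, and K_NN = p_N. Then the multiset of eigenvalues of K consists of −p_N with multiplicity N−2, together with −|p| and |p|, where |p| is the Euclidean norm of p. -/

import Mathlib

/-!
`K + p_N I = e pᵀ + p eᵀ` (with `e` the last basis vector) factors as `A B` with `A` of size
`N × 2` and `B` of size `2 × N`. Since `AB` and `BA` have the same characteristic polynomial up
to a factor `X ^ (N - 2)`, that of `K + p_N I` is `X ^ (N - 2)` times the characteristic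
polynomial of `BA = [[p_N, |p|²], [1, p_N]]`, namely `(X - p_N)² - |p|²`. Shifting by `p_N`
gives `χ_K = (X + p_N) ^ (N - 2) (X² - |p|²)`, whose roots are the eigenvalues of `K`.
-/

open Finset

/-- The matrix `K(p)` with `K i j = p j δ_{iN} + p i δ_{jN} - p N δ_{ij}`. -/
def Kmat {n : ℕ} (p : Fin (n + 1) → ℝ) : Matrix (Fin (n + 1)) (Fin (n + 1)) ℝ :=
  Matrix.of fun i j =>
    (if i = Fin.last n then p j else 0) + (if j = Fin.last n then p i else 0)
      - (if i = j then p (Fin.last n) else 0)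

/-- Euclidean norm of a vector in `ℝ^N`. -/
noncomputable def enorm {N : ℕ} (p : Fin N → ℝ) : ℝ :=
  Real.sqrt (∑ i, p i ^ 2)

open Polynomial Matrix

namespace Matrix

variable {ι R : Type*} [CommRing R]

theorem vecMulVec_add_vecMulVec_eq_mul (u v : ι → R) :
    vecMulVec u v + vecMulVec v u = of (fun i => ![u i, v i]) * of ![v, u] := by
  ext i j
  simp [mul_apply, Fin.sum_univ_two, vecMulVec_apply]

theorem charpoly_vecMulVec_add_vecMulVec [Fintype ι] [DecidableEq ι] [Nontrivial R] {m : ℕ}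
    (hι : Fintype.card ι = m + 2) (u v : ι → R) :
    (vecMulVec u v + vecMulVec v u).charpoly =
      X ^ m * (X ^ 2 - C (2 * (u ⬝ᵥ v)) * X + C ((u ⬝ᵥ v) ^ 2 - (u ⬝ᵥ u) * (v ⬝ᵥ v))) := by
  have hBA : of ![v, u] * of (fun i => ![u i, v i]) = !![v ⬝ᵥ u, v ⬝ᵥ v; u ⬝ᵥ u, u ⬝ᵥ v] := by
    ext k l
    fin_cases k <;> fin_cases l <;> rfl
  rw [vecMulVec_add_vecMulVec_eq_mul, charpoly_mul_comm_of_le _ _ (by simp [hι]), hι,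
    Fintype.card_fin, Nat.add_sub_cancel, hBA, charpoly_fin_two, trace_fin_two_of,
    det_fin_two_of, dotProduct_comm v u]
  congr 3
  · rw [two_mul]
  · ring

end Matrix

theorem Kmat_eq_vecMulVec_sub_scalar {n : ℕ} (p : Fin (n + 1) → ℝ) :
    Kmat p = vecMulVec (Pi.single (Fin.last n) 1) p + vecMulVec p (Pi.single (Fin.last n) 1)
      - scalar _ (p (Fin.last n)) := by
  ext i j
  simp [Kmat, vecMulVec_apply, Pi.single_apply, diagonal_apply]

theorem Kmat_charpoly {n : ℕ} (p : Fin (n + 2) → ℝ) :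
    (Kmat p).charpoly = (X + C (p (Fin.last (n + 1)))) ^ n * (X ^ 2 - C (∑ i, p i ^ 2)) := by
  have hpp : p ⬝ᵥ p = ∑ i, p i ^ 2 := by simp only [dotProduct, sq]
  rw [Kmat_eq_vecMulVec_sub_scalar, charpoly_sub_scalar,
    charpoly_vecMulVec_add_vecMulVec (Fintype.card_fin _)]
  simp only [single_dotProduct, Pi.single_eq_same, one_mul, hpp, mul_comp, pow_comp, add_comp,
    sub_comp, X_comp, C_comp, map_sub, map_mul, map_pow, map_ofNat, ofNat_comp]
  ring

theorem Kmat_charpoly_eq_multiset_prod {n : ℕ} (p : Fin (n + 2) → ℝ) :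
    (Kmat p).charpoly = ((Multiset.replicate n (-p (Fin.last (n + 1))) +
      {-_root_.enorm p, _root_.enorm p}).map (fun x => X - C x)).prod := by
  have hS : _root_.enorm p * _root_.enorm p = ∑ i, p i ^ 2 :=
    Real.mul_self_sqrt (sum_nonneg fun i _ => sq_nonneg (p i))
  simp only [Kmat_charpoly, Multiset.map_add, Multiset.prod_add, Multiset.map_replicate,
    Multiset.prod_replicate, Multiset.insert_eq_cons, Multiset.map_cons, Multiset.prod_cons,
    Multiset.map_singleton, Multiset.prod_singleton, map_neg, sub_neg_eq_add, ← hS, C_mul]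
  ring

/-- The eigenvalues of `K(p)` (with multiplicity) are `-p_N` with multiplicity
`N - 2`, together with `-|p|` and `|p|`, where `N = n + 2`. -/
theorem Kmat_eigenvalues (n : ℕ) (p : Fin (n + 2) → ℝ)
    (hK : (Kmat p).IsHermitian) :
    Finset.univ.val.map hK.eigenvalues =
      Multiset.replicate n (-(p (Fin.last (n + 1)))) + {-(_root_.enorm p), _root_.enorm p} := by
  have h := hK.roots_charpoly_eq_eigenvalues
  rw [Kmat_charpoly_eq_multiset_prod, roots_multiset_prod_X_sub_C] at h
  simpa using h.symm
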